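/- arXiv:2102.04041 — 7 statements merged into one kernel-verified Lean document; each statement's English description precedes it below -/
import Mathlib

section
/- Let n ≥ k ≥ 1 be integers and set s = ⌊n/k⌋. Then the spectral radius of the Turán graph satisfies ρ(T_{n,k}) = (1/2)·( n − 2s − 1 + √( (n − 2s − 1)² + 4s(s+1)(k−1) ) ). -/
open SimpleGraph Finset

attribute [local instance] Classical.propDecidable

/-- The spectral radius (largest adjacency eigenvalue) of a graph on `Fin n`. -/
noncomputable def adjSpectralRadius {n : ℕ} (G : SimpleGraph (Fin n)) : ℝ :=
  sSup (spectrum ℝ (G.adjMatrix ℝ))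

/-- `G` contains a copy of `H` (a subgraph isomorphic to `H`). -/
def Contains {α β : Type*} (G : SimpleGraph α) (H : SimpleGraph β) : Prop :=
  ∃ f : β ↪ α, ∀ a b, H.Adj a b → G.Adj (f a) (f b)

/-- The book `B_s`: `s` triangles sharing a common edge, i.e. `K_{2,s}` plus the
edge inside the part of size two. -/
def book (s : ℕ) : SimpleGraph (Fin 2 ⊕ Fin s) :=
  SimpleGraph.fromRel (fun x _ => x.isLeft = true)

/-- The theta graph `θ_{r+1} = θ(1,2,r+1)`: vertices `0,…,r+1` form a path of length
`r+1`, the edge `0 ~ (r+1)`, and vertex `r+2` is adjacent to `0` and `r+1`. -/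
def theta (r : ℕ) : SimpleGraph (Fin (r + 3)) :=
  SimpleGraph.fromRel (fun x y =>
    (x.val + 1 = y.val ∧ y.val ≤ r + 1) ∨
    (x.val = 0 ∧ y.val = r + 1) ∨
    (x.val = r + 2 ∧ (y.val = 0 ∨ y.val = r + 1)))

/-- The number of edges of a graph. -/
noncomputable def edgeCount {V : Type*} (G : SimpleGraph V) : ℕ := G.edgeSet.ncard

/-- The number of ordered pairs `(a,b) ∈ s × t` with `a ~ b`.  For disjoint `s` and `t`
this is the number `e(s,t)` of edges between `s` and `t`; for `s = t` it is `2·e(s)`. -/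
noncomputable def ordPairs {V : Type*} (G : SimpleGraph V) (s t : Finset V) : ℕ :=
  ((s ×ˢ t).filter fun p => G.Adj p.1 p.2).card

/-- The number of edges inside a vertex subset `s`. -/
noncomputable def edgesIn {V : Type*} (G : SimpleGraph V) (s : Finset V) : ℕ :=
  (G.induce (s : Set V)).edgeSet.ncard

/-!
If a symmetric nonnegative matrix has a positive eigenvector `x` for `ρ`, then pairing `x` with
`|y|` for any eigenvector `y` of `μ` gives `|μ| ≤ ρ`, so `ρ` is the largest eigenvalue. For a
complete multipartite graph with parts of sizes `c i`, the vector `v ↦ (ρ + c (part v))⁻¹` is such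
an eigenvector as soon as `ρ ≥ 0` solves `∑ i, c i / (ρ + c i) = 1`. In `T_{n,k}` there are
`n % k` parts of size `s + 1` and `k - n % k` of size `s`, and that equation becomes
`ρ ^ 2 = (n - 2 s - 1) ρ + s (s + 1) (k - 1)`, whose nonnegative root is the stated value.
-/

namespace Matrix

variable {n : Type*} [Fintype n] [DecidableEq n]

theorem mem_spectrum_iff_exists_mulVec_eq_smul {K : Type*} [Field K] (A : Matrix n n K) (μ : K) :
    μ ∈ spectrum K A ↔ ∃ v ≠ 0, A *ᵥ v = μ • v := by
  rw [← spectrum_toLin', ← Module.End.hasEigenvalue_iff_mem_spectrum]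
  constructor
  · intro h
    obtain ⟨v, hv⟩ := h.exists_hasEigenvector
    exact ⟨v, hv.2, Module.End.mem_eigenspace_iff.mp hv.1⟩
  · rintro ⟨v, hv0, hv⟩
    exact Module.End.hasEigenvalue_of_hasEigenvector ⟨Module.End.mem_eigenspace_iff.mpr hv, hv0⟩

theorem abs_le_of_mulVec_eq_smul_of_pos {A : Matrix n n ℝ} (hA : A.IsSymm)
    (hA₀ : ∀ i j, 0 ≤ A i j) {x : n → ℝ} (hx : ∀ i, 0 < x i) {ρ : ℝ} (hρ : A *ᵥ x = ρ • x)
    {μ : ℝ} (hμ : μ ∈ spectrum ℝ A) : |μ| ≤ ρ := by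
  obtain ⟨y, hy0, hy⟩ := (mem_spectrum_iff_exists_mulVec_eq_smul A μ).mp hμ
  set z : n → ℝ := fun i => |y i|
  have hz : ∀ i, |μ| * z i ≤ (A *ᵥ z) i := fun i => by
    calc |μ| * z i = |(A *ᵥ y) i| := by simp [z, hy, abs_mul]
      _ ≤ ∑ j, |A i j * y j| := Finset.abs_sum_le_sum_abs _ _
      _ = (A *ᵥ z) i := by simp [z, mulVec, dotProduct, abs_mul, abs_of_nonneg (hA₀ _ _)]
  have hxz : 0 < x ⬝ᵥ z := by
    obtain ⟨i, hi⟩ := Function.ne_iff.mp hy0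
    exact Finset.sum_pos' (fun j _ => mul_nonneg (hx j).le (abs_nonneg _))
      ⟨i, mem_univ i, mul_pos (hx i) (abs_pos.mpr hi)⟩
  refine le_of_mul_le_mul_right ?_ hxz
  calc |μ| * (x ⬝ᵥ z) = x ⬝ᵥ (|μ| • z) := by rw [dotProduct_smul, smul_eq_mul]
    _ ≤ x ⬝ᵥ (A *ᵥ z) :=
      Finset.sum_le_sum fun i _ => mul_le_mul_of_nonneg_left (hz i) (hx i).le
    _ = (A *ᵥ x) ⬝ᵥ z := by rw [dotProduct_mulVec, ← vecMul_transpose, hA.eq]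
    _ = ρ * (x ⬝ᵥ z) := by rw [hρ, smul_dotProduct, smul_eq_mul]

theorem sSup_spectrum_eq_of_mulVec_eq_smul_of_pos [Nonempty n] {A : Matrix n n ℝ}
    (hA : A.IsSymm) (hA₀ : ∀ i j, 0 ≤ A i j) {x : n → ℝ} (hx : ∀ i, 0 < x i) {ρ : ℝ}
    (hρ : A *ᵥ x = ρ • x) :
    sSup (spectrum ℝ A) = ρ := by
  have hx0 : x ≠ 0 := fun h => (hx (Classical.arbitrary n)).ne' (congrFun h _)
  refine IsGreatest.csSup_eq ⟨(mem_spectrum_iff_exists_mulVec_eq_smul A ρ).mpr ⟨x, hx0, hρ⟩, ?_⟩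
  exact fun μ hμ => (le_abs_self μ).trans (abs_le_of_mulVec_eq_smul_of_pos hA hA₀ hx hρ hμ)

end Matrix

open Matrix

namespace SimpleGraph

variable {V ι : Type*} [Fintype V] [Fintype ι] [DecidableEq ι]

theorem adjMatrix_mulVec_eq_smul_of_adj_iff_ne (G : SimpleGraph V) [DecidableRel G.Adj]
    {f : V → ι} (hG : ∀ v w, G.Adj v w ↔ f v ≠ f w) {ρ : ℝ} (hρ : 0 ≤ ρ)
    (hsum : ∑ i, (#{v | f v = i} : ℝ) / (ρ + #{v | f v = i}) = 1) :
    G.adjMatrix ℝ *ᵥ (fun v => (ρ + #{w | f w = f v})⁻¹) =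
      ρ • fun v => (ρ + #{w | f w = f v})⁻¹ := by
  set c : ι → ℝ := fun i => #{v | f v = i}
  set x : V → ℝ := fun v => (ρ + c (f v))⁻¹
  show G.adjMatrix ℝ *ᵥ x = ρ • x
  have hfiber : ∀ i, ∑ w with f w = i, x w = c i / (ρ + c i) := fun i => by
    rw [sum_congr rfl fun w hw => show x w = (ρ + c i)⁻¹ by rw [← (mem_filter.mp hw).2],
      sum_const, nsmul_eq_mul, div_eq_mul_inv]
  have htotal : ∑ w, x w = 1 := by
    rw [← sum_fiberwise univ f, ← hsum]
    exact sum_congr rfl fun i _ => hfiber i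
  ext v
  have hcv : 0 < ρ + c (f v) := by
    have : 0 < #{w | f w = f v} := card_pos.mpr ⟨v, by simp⟩
    positivity
  have hneigh : G.neighborFinset v = ({w | ¬f w = f v} : Finset V) := by
    ext w; simp [hG, ne_comm]
  have hsplit := sum_filter_add_sum_filter_not univ (fun w => f w = f v) x
  rw [htotal, hfiber] at hsplit
  rw [adjMatrix_mulVec_apply, hneigh, Pi.smul_apply, smul_eq_mul, eq_sub_of_add_eq' hsplit,
    show x v = (ρ + c (f v))⁻¹ from rfl]
  field_simp
  ring

theorem sSup_spectrum_adjMatrix_of_adj_iff_ne [Nonempty V] [DecidableEq V] (G : SimpleGraph V)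
    [DecidableRel G.Adj] {f : V → ι} (hG : ∀ v w, G.Adj v w ↔ f v ≠ f w) {ρ : ℝ} (hρ : 0 ≤ ρ)
    (hsum : ∑ i, (#{v | f v = i} : ℝ) / (ρ + #{v | f v = i}) = 1) :
    sSup (spectrum ℝ (G.adjMatrix ℝ)) = ρ := by
  refine Matrix.sSup_spectrum_eq_of_mulVec_eq_smul_of_pos G.isSymm_adjMatrix
    (fun i j => by rw [adjMatrix_apply]; split_ifs <;> norm_num) (fun v => ?_)
    (G.adjMatrix_mulVec_eq_smul_of_adj_iff_ne hG hρ hsum)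
  have : 0 < #{w | f w = f v} := card_pos.mpr ⟨v, by simp⟩
  positivity

end SimpleGraph

namespace Fin

theorem card_filter_val_mod_eq (n : ℕ) {k j : ℕ} (hj : j < k) :
    #{v : Fin n | v.val % k = j} = n / k + if j < n % k then 1 else 0 := by
  have hk : 0 < k := by omega
  rw [card_filter, Fin.sum_univ_eq_sum_range (fun i => if i % k = j then 1 else 0), ← card_filter,
    ← Nat.count_eq_card_filter_range]
  convert Nat.count_modEq_card n hk j using 3
  · simp [Nat.ModEq, Nat.mod_eq_of_lt hj]
  · rw [Nat.mod_eq_of_lt hj]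

theorem sum_ite_val_lt {M : Type*} [AddCommMonoid M] {k r : ℕ} (hr : r ≤ k) (a b : M) :
    ∑ j : Fin k, (if (j : ℕ) < r then a else b) = r • a + (k - r) • b := by
  rw [Fin.sum_univ_eq_sum_range (fun j => if j < r then a else b), ← sum_range_add_sum_Ico _ hr,
    sum_congr rfl fun j hj => if_pos (mem_range.mp hj),
    sum_congr rfl fun j hj => if_neg (mem_Ico.mp hj).1.not_gt]
  simp

end Fin

theorem add_sqrt_sq_add_mul_div_two_nonneg {b c : ℝ} (hc : 0 ≤ c) :
    0 ≤ (b + √(b ^ 2 + 4 * c)) / 2 := by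
  have hb : |b| ≤ √(b ^ 2 + 4 * c) := Real.abs_le_sqrt (by linarith)
  linarith [neg_abs_le b]

theorem add_sqrt_sq_add_mul_div_two_sq {b c : ℝ} (hc : 0 ≤ c) :
    ((b + √(b ^ 2 + 4 * c)) / 2) ^ 2 = b * ((b + √(b ^ 2 + 4 * c)) / 2) + c := by
  linear_combination Real.sq_sqrt (by positivity : 0 ≤ b ^ 2 + 4 * c) / 4

theorem adjSpectralRadius_turanGraph_eq_of_sq_eq {n k : ℕ} (hk : 0 < k) (hn : k ≤ n) {ρ : ℝ}
    (hρ₀ : 0 ≤ ρ) (hρ : ρ ^ 2 = ((n : ℝ) - 2 * (n / k : ℕ) - 1) * ρ +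
      (n / k : ℕ) * ((n / k : ℕ) + 1) * ((k : ℝ) - 1)) :
    adjSpectralRadius (turanGraph n k) = ρ := by
  have : Nonempty (Fin n) := ⟨⟨0, by omega⟩⟩
  obtain ⟨f, hf⟩ : ∃ f : Fin n → Fin k, ∀ v, (f v : ℕ) = v % k :=
    ⟨fun v => ⟨v % k, Nat.mod_lt _ hk⟩, fun _ => rfl⟩
  unfold adjSpectralRadius
  convert sSup_spectrum_adjMatrix_of_adj_iff_ne (turanGraph n k) (f := f)
    (fun v w => by simp [turanGraph_adj, hf, Fin.ext_iff]) hρ₀ ?_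
  have hterm : ∀ j : Fin k, (#{v | f v = j} : ℝ) / (ρ + #{v | f v = j}) =
      if (j : ℕ) < n % k then ((n / k : ℕ) + 1) / (ρ + ((n / k : ℕ) + 1))
      else (n / k : ℕ) / (ρ + (n / k : ℕ)) := fun j => by
    have hc : #{v | f v = j} = n / k + if (j : ℕ) < n % k then 1 else 0 := by
      simpa [hf, Fin.ext_iff] using Fin.card_filter_val_mod_eq n j.isLt
    rw [hc]
    split_ifs <;> simp
  have hr : n % k ≤ k := (Nat.mod_lt n hk).le
  have hnR : (n : ℝ) = k * (n / k : ℕ) + (n % k : ℕ) := by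
    exact_mod_cast (Nat.div_add_mod n k).symm
  have hs : (0 : ℝ) < (n / k : ℕ) := by exact_mod_cast Nat.div_pos hn hk
  rw [sum_congr rfl fun j _ => hterm j, Fin.sum_ite_val_lt hr, nsmul_eq_mul, nsmul_eq_mul,
    Nat.cast_sub hr]
  field_simp
  linear_combination -hρ - ρ * hnR

/-- The spectral radius of the Turán graph `T_{n,k}`, where `s = ⌊n/k⌋`. -/
theorem stmt8 (n k : ℕ) (hk : 1 ≤ k) (hn : k ≤ n) :
    adjSpectralRadius (turanGraph n k) =
      ((n : ℝ) - 2 * (n / k : ℕ) - 1 +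
        Real.sqrt (((n : ℝ) - 2 * (n / k : ℕ) - 1) ^ 2 +
          4 * (n / k : ℕ) * ((n / k : ℕ) + 1) * ((k : ℝ) - 1))) / 2 := by
  have hc : (0 : ℝ) ≤ (n / k : ℕ) * ((n / k : ℕ) + 1) * ((k : ℝ) - 1) := by
    have : (1 : ℝ) ≤ k := by exact_mod_cast hk
    have : (0 : ℝ) ≤ k - 1 := by linarith
    positivity
  rw [show (4 : ℝ) * (n / k : ℕ) * ((n / k : ℕ) + 1) * ((k : ℝ) - 1) =
    4 * ((n / k : ℕ) * ((n / k : ℕ) + 1) * ((k : ℝ) - 1)) by ring]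
  exact adjSpectralRadius_turanGraph_eq_of_sq_eq hk hn (add_sqrt_sq_add_mul_div_two_nonneg hc)
    (add_sqrt_sq_add_mul_div_two_sq hc)
end

section
/- Let n ≥ k ≥ 1 be integers. Then (n/2)·ρ(T_{n,k}) < e(T_{n,k}) + 1, where e(T_{n,k}) denotes the number of edges of the Turán graph T_{n,k}. -/
open SimpleGraph Finset

attribute [local instance] Classical.propDecidable

/-!
Write `n = k s + a` with `0 ≤ a < k`: `T_{n,k}` has `a` parts of size `s + 1` and `k - a` of
size `s`, so `2 e = n² - n s - a (s + 1)`. For a nonnegative matrix, a positive vector `x` with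
`A x ≤ t x` bounds every real eigenvalue by `t` (Collatz–Wielandt). If `a = 0` the graph is
`(n - s)`-regular and `n ρ = 2 e`. Otherwise give weight `α < 1` to the vertices of the larger
parts and `1` to the others; for a suitable `α` this test vector satisfies `A x ≤ t x` with
`n t = 2 e + 1`, so `n ρ ≤ 2 e + 1`.
-/

open Matrix

theorem Matrix.exists_mulVec_eq_smul_of_mem_spectrum {ι : Type*} [Fintype ι] [DecidableEq ι]
    {A : Matrix ι ι ℝ} {μ : ℝ} (hμ : μ ∈ spectrum ℝ A) :
    ∃ y : ι → ℝ, y ≠ 0 ∧ A *ᵥ y = μ • y := by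
  rw [← Matrix.spectrum_toLin', ← Module.End.hasEigenvalue_iff_mem_spectrum] at hμ
  obtain ⟨y, hy⟩ := hμ.exists_hasEigenvector
  exact ⟨y, hy.2, by simpa using hy.apply_eq_smul⟩

theorem Matrix.le_of_mem_spectrum_of_mulVec_le {ι : Type*} [Fintype ι] [DecidableEq ι]
    {A : Matrix ι ι ℝ} (hA : ∀ i j, 0 ≤ A i j) {x : ι → ℝ} (hx : ∀ i, 0 < x i) {t : ℝ}
    (hAx : ∀ i, (A *ᵥ x) i ≤ t * x i) {μ : ℝ} (hμ : μ ∈ spectrum ℝ A) : μ ≤ t := by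
  obtain ⟨y, hy0, hy⟩ := Matrix.exists_mulVec_eq_smul_of_mem_spectrum hμ
  obtain ⟨j₀, hj₀⟩ := Function.ne_iff.mp hy0
  have : Nonempty ι := ⟨j₀⟩
  obtain ⟨i, hi⟩ := Finite.exists_max fun j => |y j| / x j
  set c := |y i| / x i
  have hyj : ∀ j, |y j| ≤ c * x j := fun j => (div_le_iff₀ (hx j)).mp (hi j)
  have hyi : 0 < |y i| := by
    have := (div_pos (abs_pos.mpr hj₀) (hx j₀)).trans_le (hi j₀)
    exact (div_pos_iff_of_pos_right (hx i)).mp this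
  have key : |μ| * |y i| ≤ t * |y i| := calc
    |μ| * |y i| = |∑ j, A i j * y j| := by
      rw [← abs_mul, ← smul_eq_mul, ← Pi.smul_apply, ← hy]; rfl
    _ ≤ ∑ j, A i j * |y j| := by
      refine (abs_sum_le_sum_abs _ _).trans_eq (sum_congr rfl fun j _ => ?_)
      rw [abs_mul, abs_of_nonneg (hA i j)]
    _ ≤ ∑ j, A i j * (c * x j) := by gcongr with j; exacts [hA i j, hyj j]
    _ = c * (A *ᵥ x) i := by
      simp only [mulVec, dotProduct, mul_sum]; exact sum_congr rfl fun j _ => by ring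
    _ ≤ c * (t * x i) :=
      mul_le_mul_of_nonneg_left (hAx i) (div_nonneg (abs_nonneg _) (hx i).le)
    _ = t * |y i| := by simp only [c]; field_simp [(hx i).ne']
  exact (le_abs_self μ).trans (le_of_mul_le_mul_right key hyi)

theorem adjSpectralRadius_le_of_mulVec_le {n : ℕ} (G : SimpleGraph (Fin n))
    [DecidableRel G.Adj] {x : Fin n → ℝ} (hx : ∀ i, 0 < x i) {t : ℝ} (ht : 0 ≤ t)
    (hAx : ∀ i, (G.adjMatrix ℝ *ᵥ x) i ≤ t * x i) :
    adjSpectralRadius G ≤ t := by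
  unfold adjSpectralRadius
  convert Real.sSup_le (fun _ hμ => Matrix.le_of_mem_spectrum_of_mulVec_le
    (fun i j => by rw [adjMatrix_apply]; split_ifs <;> norm_num) hx hAx hμ) ht

namespace SimpleGraph

variable {n k : ℕ}

theorem card_filter_mod_eq (hk : 0 < k) (j : ℕ) :
    #{w : Fin n | (w : ℕ) % k = j % k} = n / k + if j % k < n % k then 1 else 0 := by
  rw [← Nat.count_modEq_card _ hk, Nat.count_eq_card_filter_range, ← Nat.Iio_eq_range,
    ← Fin.map_valEmbedding_univ, filter_map, card_map]
  rfl

theorem card_filter_mod_lt_mod (hk : 0 < k) :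
    #{w : Fin n | (w : ℕ) % k < n % k} = n % k * (n / k + 1) := by
  rw [card_eq_sum_card_fiberwise (f := fun w : Fin n => (w : ℕ) % k) (t := range (n % k))
    fun w hw => mem_range.mpr (mem_filter.mp hw).2]
  calc _ = ∑ _j ∈ range (n % k), (n / k + 1) := sum_congr rfl fun j hj => by
        have hjk : j % k = j := Nat.mod_eq_of_lt ((mem_range.mp hj).trans (Nat.mod_lt n hk))
        have hcard := card_filter_mod_eq (n := n) hk j
        rw [hjk, if_pos (mem_range.mp hj)] at hcard
        rw [← hcard, filter_filter]
        congr 1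
        ext w
        simp only [mem_filter, mem_univ, true_and, and_iff_right_iff_imp]
        exact fun h => h ▸ mem_range.mp hj
    _ = n % k * (n / k + 1) := by rw [sum_const, card_range, smul_eq_mul]

theorem turanGraph_adjMatrix_mulVec_apply (x : Fin n → ℝ) (v : Fin n) :
    ((turanGraph n k).adjMatrix ℝ *ᵥ x) v
      = ∑ w, x w - ∑ w ∈ {w : Fin n | (w : ℕ) % k = v % k}, x w := by
  rw [adjMatrix_mulVec_apply, eq_sub_iff_add_eq, ← sum_filter_not_add_sum_filter univ
    (fun w : Fin n => (w : ℕ) % k = v % k)]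
  congr 2
  ext w
  simp [turanGraph_adj, eq_comm]

theorem degree_turanGraph_add_card (hk : 0 < k) (v : Fin n) :
    (turanGraph n k).degree v + (n / k + if (v : ℕ) % k < n % k then 1 else 0) = n := by
  rw [← card_filter_mod_eq hk, ← card_neighborFinset_eq_degree, neighborFinset_eq_filter]
  convert card_filter_add_card_filter_not (s := univ)
    (fun w : Fin n => ¬ (w : ℕ) % k = v % k) using 3 <;> simp [turanGraph_adj, eq_comm]

theorem two_mul_edgeCount_turanGraph (hk : 0 < k) :
    2 * edgeCount (turanGraph n k) + n * (n / k) + n % k * (n / k + 1) = n ^ 2 := calc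
  _ = ∑ v, (turanGraph n k).degree v
        + ∑ v : Fin n, (n / k + if (v : ℕ) % k < n % k then 1 else 0) := by
    rw [edgeCount, ← coe_edgeFinset, Set.ncard_coe_finset, ← sum_degrees_eq_twice_card_edges,
      sum_add_distrib, sum_const, ← card_filter, card_filter_mod_lt_mod hk]
    simp [add_assoc]
  _ = ∑ _v : Fin n, n := by
    rw [← sum_add_distrib]; exact sum_congr rfl fun v _ => degree_turanGraph_add_card hk v
  _ = n ^ 2 := by simp [sq]

theorem turanGraph_adjMatrix_mulVec_comp_mod (hk : 0 < k) (g : ℕ → ℝ) (v : Fin n) :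
    ((turanGraph n k).adjMatrix ℝ *ᵥ fun w => g ((w : ℕ) % k)) v
      = ∑ w : Fin n, g ((w : ℕ) % k)
        - ((n / k + if (v : ℕ) % k < n % k then 1 else 0 : ℕ) : ℝ) * g ((v : ℕ) % k) := by
  rw [turanGraph_adjMatrix_mulVec_apply, ← card_filter_mod_eq hk, ← nsmul_eq_mul, ← sum_const]
  congr 1
  exact sum_congr rfl fun w hw => by rw [(mem_filter.mp hw).2]

theorem turanGraph_adjMatrix_mulVec_ite_mod_lt (hk : 0 < k) (α : ℝ) (v : Fin n) :
    ((turanGraph n k).adjMatrix ℝ *ᵥ fun w => if (w : ℕ) % k < n % k then α else 1) v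
      = α * ((n % k * (n / k + 1) : ℕ) : ℝ) + (n - ((n % k * (n / k + 1) : ℕ) : ℝ))
        - (((n / k : ℕ) : ℝ) + if (v : ℕ) % k < n % k then 1 else 0)
          * if (v : ℕ) % k < n % k then α else 1 := by
  have hsum : ∑ w : Fin n, (if (w : ℕ) % k < n % k then α else 1)
      = n + (α - 1) * ((n % k * (n / k + 1) : ℕ) : ℝ) := calc
    _ = ∑ w : Fin n, (1 + (α - 1) * if (w : ℕ) % k < n % k then 1 else 0) :=
      sum_congr rfl fun w _ => by split_ifs <;> ring
    _ = _ := by rw [sum_add_distrib, ← mul_sum, sum_boole, card_filter_mod_lt_mod hk]; simp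
  rw [turanGraph_adjMatrix_mulVec_comp_mod hk fun j => if j < n % k then α else 1, hsum,
    Nat.cast_add, Nat.cast_ite, Nat.cast_one, Nat.cast_zero]
  ring

theorem adjSpectralRadius_turanGraph_le (hk : 0 < k) {α t : ℝ} (hα : 0 < α) (ht : 0 ≤ t)
    (hsmall : α * ((n % k * (n / k + 1) : ℕ) : ℝ) + (n - ((n % k * (n / k + 1) : ℕ) : ℝ))
      - ((n / k : ℕ) : ℝ) ≤ t)
    (hlarge : α * ((n % k * (n / k + 1) : ℕ) : ℝ) + (n - ((n % k * (n / k + 1) : ℕ) : ℝ))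
      - (((n / k : ℕ) : ℝ) + 1) * α ≤ t * α) :
    adjSpectralRadius (turanGraph n k) ≤ t := by
  refine adjSpectralRadius_le_of_mulVec_le _ (x := fun w => if (w : ℕ) % k < n % k then α else 1)
    (fun w => by split_ifs; exacts [hα, one_pos]) ht fun v => ?_
  rw [turanGraph_adjMatrix_mulVec_ite_mod_lt hk]
  by_cases hv : (v : ℕ) % k < n % k
  · simpa [hv] using hlarge
  · simpa [hv] using hsmall

theorem mul_adjSpectralRadius_turanGraph_le (hk : 0 < k) :
    n * adjSpectralRadius (turanGraph n k) ≤ 2 * edgeCount (turanGraph n k) + 1 := by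
  have hE : (2 * edgeCount (turanGraph n k) : ℝ) + n * ((n / k : ℕ) : ℝ)
      + ((n % k * (n / k + 1) : ℕ) : ℝ) = n ^ 2 := by
    exact_mod_cast two_mul_edgeCount_turanGraph hk
  set s : ℝ := ((n / k : ℕ) : ℝ)
  set m : ℝ := ((n % k * (n / k + 1) : ℕ) : ℝ)
  rcases (n % k).eq_zero_or_pos with hdvd | hpos
  · have hm : m = 0 := by simp only [m, hdvd, zero_mul, Nat.cast_zero]
    have hs : s ≤ n := by simp only [s]; exact_mod_cast Nat.div_le_self n k
    calc n * adjSpectralRadius (turanGraph n k)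
        ≤ n * (n - s) := by
          gcongr
          exact adjSpectralRadius_turanGraph_le hk one_pos (sub_nonneg.mpr hs) (by simp [s])
            (by simp [s]; linarith)
      _ ≤ 2 * edgeCount (turanGraph n k) + 1 := by linarith
  · have hn : (1 : ℝ) ≤ n := by exact_mod_cast hpos.trans_le (Nat.mod_le n k)
    have hm : 1 ≤ m := by simp only [m]; exact_mod_cast Nat.one_le_iff_ne_zero.mpr (by positivity)
    -- `α` is chosen so that `n * t = 2 e + 1` exactly; the constraint at the vertices of the
    -- larger parts then becomes `n ^ 2 - n (m - 1) + (m - 1) ^ 2 ≥ 0`.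
    set α := 1 - (m - 1) / (n * m)
    set t := α * m + (n - m) - s
    have hα : 0 < α := by
      rw [sub_pos, div_lt_one (by positivity)]; nlinarith
    have hnt : n * t = 2 * edgeCount (turanGraph n k) + 1 := by
      simp only [t, α]; field_simp; linarith
    have ht : 0 ≤ t :=
      (mul_nonneg_iff_of_pos_left (c := (n : ℝ)) (by linarith)).mp (by rw [hnt]; positivity)
    have hlarge : α * m + (n - m) - (s + 1) * α ≤ t * α := by
      have hq : t * α - (α * m + (n - m) - (s + 1) * α)
          = (n ^ 2 - n * (m - 1) + (m - 1) ^ 2) / (n ^ 2 * m) := by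
        simp only [t, α]; field_simp; ring
      have : 0 ≤ (n ^ 2 - n * (m - 1) + (m - 1) ^ 2) / (n ^ 2 * m) := by
        apply div_nonneg _ (by positivity); nlinarith [sq_nonneg (n - (m - 1))]
      linarith
    calc n * adjSpectralRadius (turanGraph n k)
        ≤ n * t := by gcongr; exact adjSpectralRadius_turanGraph_le hk hα ht le_rfl hlarge
      _ = 2 * edgeCount (turanGraph n k) + 1 := hnt

end SimpleGraph

theorem stmt9_general (n k : ℕ) (hk : 1 ≤ k) :
    (n : ℝ) / 2 * adjSpectralRadius (turanGraph n k) <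
      (edgeCount (turanGraph n k) : ℝ) + 1 := by
  linarith [mul_adjSpectralRadius_turanGraph_le (n := n) hk]

/-- `(n/2)·ρ(T_{n,k}) < e(T_{n,k}) + 1` for `n ≥ k ≥ 1`. -/
theorem stmt9 (n k : ℕ) (hk : 1 ≤ k) (hn : k ≤ n) :
    (n : ℝ) / 2 * adjSpectralRadius (turanGraph n k) <
      (edgeCount (turanGraph n k) : ℝ) + 1 :=
  stmt9_general n k hk
end

section
/- Let r ≥ 2 and let G be a bipartite graph with parts X and Y, where |X| ≥ r and |Y| ≥ r − 1. If G does not contain a path on 2r+1 vertices (i.e., of length 2r) with both endpoints in X, then e(G) ≤ (r−1)|X| + r|Y| − r(r−1), with equality if and only if G is the complete bipartite graph K_{|X|,|Y|} and moreover |X| = r or |Y| = r − 1. -/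
open SimpleGraph Finset

attribute [local instance] Classical.propDecidable

lemma chain_walk {V : Type*} (G : SimpleGraph V) :
    ∀ (n : ℕ) (v : ℕ → V), (∀ i, i < n → G.Adj (v i) (v (i+1))) →
    (∀ i j, i ≤ n → j ≤ n → v i = v j → i = j) →
    ∃ p : G.Walk (v 0) (v n), p.IsPath ∧ p.length = n ∧
      ∀ u ∈ p.support, ∃ i, i ≤ n ∧ v i = u := by
  intro n
  induction n with
  | zero =>
    intro v _ _
    exact ⟨.nil, by simp, by simp, by simp⟩
  | succ n ih =>
    intro v hadj hinj
    obtain ⟨p, hp, hl, hs⟩ := ih (fun i => v (i+1))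
      (fun i hi => hadj (i+1) (by omega))
      (fun i j hi hj h => by
        have := hinj (i+1) (j+1) (by omega) (by omega) h; omega)
    refine ⟨Walk.cons (hadj 0 (by omega)) p, ?_, ?_, ?_⟩
    · refine hp.cons ?_
      intro hmem
      obtain ⟨i, hi, hv⟩ := hs _ hmem
      have := hinj (i+1) 0 (by omega) (by omega) hv
      omega
    · simp [hl]
    · intro u hu
      rw [Walk.support_cons] at hu
      rcases List.mem_cons.1 hu with h | h
      · exact ⟨0, by omega, h.symm⟩
      · obtain ⟨i, hi, hv⟩ := hs _ h
        exact ⟨i+1, by omega, hv⟩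

lemma seqs_give_path {X Y : Type*} (G : SimpleGraph (X ⊕ Y)) (r : ℕ)
    (xs : ℕ → X) (ys : ℕ → Y)
    (hxinj : ∀ i j, i ≤ r → j ≤ r → xs i = xs j → i = j)
    (hyinj : ∀ i j, i < r → j < r → ys i = ys j → i = j)
    (hadj1 : ∀ i, i < r → G.Adj (Sum.inl (xs i)) (Sum.inr (ys i)))
    (hadj2 : ∀ i, i < r → G.Adj (Sum.inr (ys i)) (Sum.inl (xs (i+1)))) :
    ∃ (u v : X) (p : G.Walk (Sum.inl u) (Sum.inl v)), p.IsPath ∧ p.length = 2*r := by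
  set v : ℕ → (X ⊕ Y) := fun n => if n % 2 = 0 then Sum.inl (xs (n/2)) else Sum.inr (ys (n/2)) with hv
  have hadj : ∀ i, i < 2*r → G.Adj (v i) (v (i+1)) := by
    intro i hi
    rcases Nat.even_or_odd i with ⟨k, hk⟩ | ⟨k, hk⟩
    · have h1 : i % 2 = 0 := by omega
      have h2 : (i+1) % 2 ≠ 0 := by omega
      have h3 : i / 2 = k := by omega
      have h4 : (i+1) / 2 = k := by omega
      simp only [hv, h3, h4, if_pos h1, if_neg h2]
      exact hadj1 k (by omega)
    · have h1 : i % 2 ≠ 0 := by omega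
      have h2 : (i+1) % 2 = 0 := by omega
      have h3 : i / 2 = k := by omega
      have h4 : (i+1) / 2 = k + 1 := by omega
      simp only [hv, h3, h4]
      rw [if_neg h1, if_pos h2]
      exact hadj2 k (by omega)
  have hinj : ∀ i j, i ≤ 2*r → j ≤ 2*r → v i = v j → i = j := by
    intro i j hi hj h
    simp only [hv] at h
    by_cases h1 : i % 2 = 0 <;> by_cases h2 : j % 2 = 0
    · rw [if_pos h1, if_pos h2] at h
      have := hxinj (i/2) (j/2) (by omega) (by omega) (Sum.inl.inj h)
      omega
    · rw [if_pos h1, if_neg h2] at h; exact absurd h (by simp)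
    · rw [if_neg h1, if_pos h2] at h; exact absurd h (by simp)
    · rw [if_neg h1, if_neg h2] at h
      have := hyinj (i/2) (j/2) (by omega) (by omega) (Sum.inr.inj h)
      omega
  obtain ⟨p, hp, hl, -⟩ := chain_walk G (2*r) v hadj hinj
  have e0 : v 0 = Sum.inl (xs 0) := by simp [hv]
  have e1 : v (2*r) = Sum.inl (xs r) := by
    have : 2 * r % 2 = 0 := by omega
    have h2 : 2 * r / 2 = r := by omega
    simp only [hv, this, h2, if_pos]
  exact ⟨xs 0, xs r, (p.copy e0 e1), by simp [hp], by simp [hl]⟩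



lemma exists_inj_fun {α : Type*} (t : Finset α) (k : ℕ) (hk : k ≤ t.card) (hne : t.Nonempty) :
    ∃ f : ℕ → α, (∀ i, i < k → f i ∈ t) ∧ (∀ i j, i < k → j < k → f i = f j → i = j) := by
  obtain ⟨u, hu, hcard⟩ := Finset.exists_subset_card_eq hk
  let e := u.equivFin
  refine ⟨fun i => if h : i < k then (e.symm ⟨i, by omega⟩ : u).1 else hne.choose, ?_, ?_⟩
  · intro i hi
    dsimp only
    rw [dif_pos hi]
    exact hu (e.symm ⟨i, by omega⟩).2
  · intro i j hi hj h
    dsimp only at h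
    rw [dif_pos hi, dif_pos hj] at h
    have := e.symm.injective (Subtype.ext h)
    exact Fin.mk.inj_iff.1 this

lemma greedy_seqs {X Y : Type*} (G : SimpleGraph (X ⊕ Y)) (r : ℕ) (hr : 1 ≤ r)
    (s : Finset X) (t : Finset Y) (hs : s.Nonempty)
    (hdx : ∀ x ∈ s, r ≤ (t.filter fun y => G.Adj (Sum.inl x) (Sum.inr y)).card)
    (hdy : ∀ y ∈ t, r + 1 ≤ (s.filter fun x => G.Adj (Sum.inl x) (Sum.inr y)).card) :
    ∃ (xs : ℕ → X) (ys : ℕ → Y),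
      (∀ i j, i ≤ r → j ≤ r → xs i = xs j → i = j) ∧
      (∀ i j, i < r → j < r → ys i = ys j → i = j) ∧
      (∀ i, i < r → G.Adj (Sum.inl (xs i)) (Sum.inr (ys i))) ∧
      (∀ i, i < r → G.Adj (Sum.inr (ys i)) (Sum.inl (xs (i+1)))) := by
  obtain ⟨x0, hx0⟩ := hs
  have hy0 : ∃ y0, y0 ∈ t := by
    have hcard := hdx x0 hx0
    have hne : (t.filter fun y => G.Adj (Sum.inl x0) (Sum.inr y)).Nonempty :=
      Finset.card_pos.1 (by omega)
    obtain ⟨y0, hy0⟩ := hne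
    exact ⟨y0, (Finset.mem_filter.1 hy0).1⟩
  obtain ⟨y0, hy0t⟩ := hy0
  -- build by induction on i
  have key : ∀ i, i ≤ r → ∃ (xs : ℕ → X) (ys : ℕ → Y),
      (∀ j, j ≤ i → xs j ∈ s) ∧ (∀ j, j < i → ys j ∈ t) ∧
      (∀ j k, j ≤ i → k ≤ i → xs j = xs k → j = k) ∧
      (∀ j k, j < i → k < i → ys j = ys k → j = k) ∧
      (∀ j, j < i → G.Adj (Sum.inl (xs j)) (Sum.inr (ys j))) ∧
      (∀ j, j < i → G.Adj (Sum.inr (ys j)) (Sum.inl (xs (j+1)))) := by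
    intro i
    induction i with
    | zero =>
      intro _
      refine ⟨fun _ => x0, fun _ => y0, fun j hj => hx0, fun j hj => by omega,
        fun j k hj hk _ => by omega, fun j k hj hk _ => by omega,
        fun j hj => by omega, fun j hj => by omega⟩
    | succ i ih =>
      intro hi
      obtain ⟨xs, ys, hxs, hys, hxinj, hyinj, h1, h2⟩ := ih (by omega)
      -- pick new y adjacent to xs i, avoiding ys 0..i-1
      have hxi : xs i ∈ s := hxs i le_rfl
      set A := (t.filter fun y => G.Adj (Sum.inl (xs i)) (Sum.inr y)) with hA
      set B := (Finset.range i).image ys with hB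
      have hAB : (A \ B).Nonempty := by
        apply Finset.card_pos.1
        have h1 : r ≤ A.card := hdx _ hxi
        have h2 : B.card ≤ i := le_trans (Finset.card_image_le) (by simp)
        have := Finset.card_le_card_sdiff_add_card (s := A) (t := B)
        omega
      obtain ⟨y, hy⟩ := hAB
      obtain ⟨hyA, hyB⟩ := Finset.mem_sdiff.1 hy
      have hyt : y ∈ t := (Finset.mem_filter.1 hyA).1
      have hyadj : G.Adj (Sum.inl (xs i)) (Sum.inr y) := (Finset.mem_filter.1 hyA).2
      -- pick new x adjacent to y, avoiding xs 0..i
      set C := (s.filter fun x => G.Adj (Sum.inl x) (Sum.inr y)) with hC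
      set D := (Finset.range (i+1)).image xs with hD
      have hCD : (C \ D).Nonempty := by
        apply Finset.card_pos.1
        have h1 : r + 1 ≤ C.card := hdy _ hyt
        have h2 : D.card ≤ i + 1 := le_trans (Finset.card_image_le) (by simp)
        have := Finset.card_le_card_sdiff_add_card (s := C) (t := D)
        omega
      obtain ⟨x, hx⟩ := hCD
      obtain ⟨hxC, hxD⟩ := Finset.mem_sdiff.1 hx
      have hxss : x ∈ s := (Finset.mem_filter.1 hxC).1
      have hxadj : G.Adj (Sum.inl x) (Sum.inr y) := (Finset.mem_filter.1 hxC).2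
      have hxnew : ∀ j, j ≤ i → x ≠ xs j := by
        intro j hj he
        exact hxD (Finset.mem_image.2 ⟨j, Finset.mem_range.2 (by omega), he.symm⟩)
      have hynew : ∀ j, j < i → y ≠ ys j := by
        intro j hj he
        exact hyB (Finset.mem_image.2 ⟨j, Finset.mem_range.2 hj, he.symm⟩)
      refine ⟨Function.update xs (i+1) x, Function.update ys i y, ?_, ?_, ?_, ?_, ?_, ?_⟩
      · intro j hj
        by_cases hne : j = i+1
        · rw [hne, Function.update_self]; exact hxss
        · rw [Function.update_of_ne hne]; exact hxs j (by omega)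
      · intro j hj
        by_cases hne : j = i
        · rw [hne, Function.update_self]; exact hyt
        · rw [Function.update_of_ne hne]; exact hys j (by omega)
      · intro j k hj hk h
        by_cases hj' : j = i+1 <;> by_cases hk' : k = i+1
        · rw [hj', hk']
        · rw [hj', Function.update_self, Function.update_of_ne hk'] at h
          exact absurd h (hxnew k (by omega))
        · rw [hk', Function.update_self, Function.update_of_ne hj'] at h
          exact absurd h.symm (hxnew j (by omega))
        · rw [Function.update_of_ne hj', Function.update_of_ne hk'] at h
          exact hxinj j k (by omega) (by omega) h
      · intro j k hj hk h
        by_cases hj' : j = i <;> by_cases hk' : k = i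
        · rw [hj', hk']
        · rw [hj', Function.update_self, Function.update_of_ne hk'] at h
          exact absurd h (hynew k (by omega))
        · rw [hk', Function.update_self, Function.update_of_ne hj'] at h
          exact absurd h.symm (hynew j (by omega))
        · rw [Function.update_of_ne hj', Function.update_of_ne hk'] at h
          exact hyinj j k (by omega) (by omega) h
      · intro j hj
        by_cases hne : j = i
        · rw [hne, Function.update_self, Function.update_of_ne (by omega : i ≠ i+1)]
          exact hyadj
        · rw [Function.update_of_ne hne, Function.update_of_ne (by omega : j ≠ i+1)]
          exact h1 j (by omega)
      · intro j hj
        by_cases hne : j = i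
        · rw [hne, Function.update_self, Function.update_self]
          exact hxadj.symm
        · rw [Function.update_of_ne hne, Function.update_of_ne (by omega : j+1 ≠ i+1)]
          exact h2 j (by omega)
  obtain ⟨xs, ys, _, _, hxinj, hyinj, h1, h2⟩ := key r le_rfl
  exact ⟨xs, ys, hxinj, hyinj, h1, h2⟩



noncomputable def Ebip {X Y : Type*} (G : SimpleGraph (X ⊕ Y)) (s : Finset X) (t : Finset Y) : ℕ :=
  ∑ x ∈ s, (t.filter fun y => G.Adj (Sum.inl x) (Sum.inr y)).card

lemma Ebip_card_filter {X Y : Type*} (G : SimpleGraph (X ⊕ Y)) (s : Finset X) (t : Finset Y) :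
    Ebip G s t = ((s ×ˢ t).filter fun p => G.Adj (Sum.inl p.1) (Sum.inr p.2)).card := by
  rw [Finset.card_filter, Finset.sum_product, Ebip]
  exact Finset.sum_congr rfl fun x _ => Finset.card_filter _ _

lemma Ebip_sum_right {X Y : Type*} (G : SimpleGraph (X ⊕ Y)) (s : Finset X) (t : Finset Y) :
    Ebip G s t = ∑ y ∈ t, (s.filter fun x => G.Adj (Sum.inl x) (Sum.inr y)).card := by
  rw [Ebip_card_filter, Finset.card_filter, Finset.sum_product_right]
  exact Finset.sum_congr rfl fun y _ => (Finset.card_filter _ _).symm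

lemma Ebip_le {X Y : Type*} (G : SimpleGraph (X ⊕ Y)) (s : Finset X) (t : Finset Y) :
    Ebip G s t ≤ s.card * t.card ∧
    (Ebip G s t = s.card * t.card ↔ ∀ x ∈ s, ∀ y ∈ t, G.Adj (Sum.inl x) (Sum.inr y)) := by
  have hle : ∀ x ∈ s, (t.filter fun y => G.Adj (Sum.inl x) (Sum.inr y)).card ≤ t.card :=
    fun x _ => Finset.card_filter_le _ _
  constructor
  · calc Ebip G s t ≤ ∑ _x ∈ s, t.card := Finset.sum_le_sum hle
    _ = s.card * t.card := by rw [Finset.sum_const, smul_eq_mul]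
  · rw [show s.card * t.card = ∑ _x ∈ s, t.card by rw [Finset.sum_const, smul_eq_mul], Ebip,
      Finset.sum_eq_sum_iff_of_le hle]
    constructor
    · intro h x hx y hy
      have := h x hx
      have hf : t.filter (fun y => G.Adj (Sum.inl x) (Sum.inr y)) = t :=
        Finset.eq_of_subset_of_card_le (Finset.filter_subset _ _) (le_of_eq this.symm)
      have := hf ▸ hy
      exact (Finset.mem_filter.1 this).2
    · intro h x hx
      congr 1
      apply Finset.filter_true_of_mem
      intro y hy; exact h x hx y hy

lemma Ebip_erase_left {X Y : Type*} (G : SimpleGraph (X ⊕ Y)) (s : Finset X) (t : Finset Y)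
    (x : X) (hx : x ∈ s) :
    Ebip G s t = (t.filter fun y => G.Adj (Sum.inl x) (Sum.inr y)).card + Ebip G (s.erase x) t :=
  (Finset.add_sum_erase s _ hx).symm

lemma Ebip_erase_right {X Y : Type*} (G : SimpleGraph (X ⊕ Y)) (s : Finset X) (t : Finset Y)
    (y : Y) (hy : y ∈ t) :
    Ebip G s t = (s.filter fun x => G.Adj (Sum.inl x) (Sum.inr y)).card + Ebip G s (t.erase y) := by
  rw [Ebip_sum_right, Ebip_sum_right]
  exact (Finset.add_sum_erase t _ hy).symm

lemma edgeCount_eq_Ebip {X Y : Type*} [Fintype X] [Fintype Y] (G : SimpleGraph (X ⊕ Y))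
    (hbip : G ≤ completeBipartiteGraph X Y) :
    G.edgeSet.ncard = Ebip G Finset.univ Finset.univ := by
  classical
  rw [Ebip_card_filter]
  rw [Set.ncard_eq_toFinset_card']
  refine (Finset.card_bij (fun p _ => s(Sum.inl p.1, Sum.inr p.2)) ?_ ?_ ?_).symm
  · intro p hp
    rw [Set.mem_toFinset, SimpleGraph.mem_edgeSet]
    exact (Finset.mem_filter.1 hp).2
  · intro p1 h1 p2 h2 h
    rw [Sym2.eq_iff] at h
    rcases h with ⟨h1, h2⟩ | ⟨h1, h2⟩
    · exact Prod.ext (Sum.inl.inj h1) (Sum.inr.inj h2)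
    · exact absurd h1 (by simp)
  · intro e he
    rw [Set.mem_toFinset] at he
    induction e with
    | _ a b =>
      have hadj : G.Adj a b := he
      have hc := hbip hadj
      simp only [completeBipartiteGraph_adj] at hc
      rcases hc with ⟨ha, hb⟩ | ⟨ha, hb⟩
      · obtain ⟨x, rfl⟩ := Sum.isLeft_iff.1 ha
        obtain ⟨y, rfl⟩ := Sum.isRight_iff.1 hb
        exact ⟨(x, y), Finset.mem_filter.2 ⟨by simp, hadj⟩, rfl⟩
      · obtain ⟨y, rfl⟩ := Sum.isRight_iff.1 ha
        obtain ⟨x, rfl⟩ := Sum.isLeft_iff.1 hb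
        exact ⟨(x, y), Finset.mem_filter.2 ⟨by simp, hadj.symm⟩, Sym2.eq_swap⟩


lemma caseA_path {X Y : Type*} (G : SimpleGraph (X ⊕ Y)) (r m : ℕ) (hr : r = m + 2)
    (s : Finset X) (t : Finset Y) (x : X) (hx : x ∈ s)
    (hscard : s.card = r + 1) (htcard : r ≤ t.card)
    (y0 : Y) (hy0 : y0 ∈ t) (hxy0 : G.Adj (Sum.inl x) (Sum.inr y0))
    (hcomp : ∀ x' ∈ s.erase x, ∀ y ∈ t, G.Adj (Sum.inl x') (Sum.inr y)) :
    ∃ (u v : X) (p : G.Walk (Sum.inl u) (Sum.inl v)), p.IsPath ∧ p.length = 2*r := by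
  have hse : (s.erase x).card = r := by rw [Finset.card_erase_of_mem hx]; omega
  obtain ⟨g, hg1, hg2⟩ := exists_inj_fun (s.erase x) r (le_of_eq hse.symm)
    (Finset.card_pos.1 (by omega))
  have hte : r - 1 ≤ (t.erase y0).card := by rw [Finset.card_erase_of_mem hy0]; omega
  obtain ⟨f, hf1, hf2⟩ := exists_inj_fun (t.erase y0) (r-1) hte
    (Finset.card_pos.1 (by omega))
  set xs : ℕ → X := fun j => if j = 0 then x else g (j-1) with hxs
  set ys : ℕ → Y := fun j => if j = 0 then y0 else f (j-1) with hys
  have hgx : ∀ j, j < r → g j ≠ x := fun j hj he =>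
    (Finset.ne_of_mem_erase (hg1 j hj)) he
  have hfy : ∀ j, j < r - 1 → f j ≠ y0 := fun j hj he =>
    (Finset.ne_of_mem_erase (hf1 j hj)) he
  apply seqs_give_path G r xs ys
  · intro i j hi hj h
    simp only [hxs] at h
    by_cases h1 : i = 0 <;> by_cases h2 : j = 0
    · omega
    · rw [if_pos h1, if_neg h2] at h; exact absurd h.symm (hgx (j-1) (by omega))
    · rw [if_neg h1, if_pos h2] at h; exact absurd h (hgx (i-1) (by omega))
    · rw [if_neg h1, if_neg h2] at h
      have := hg2 (i-1) (j-1) (by omega) (by omega) h; omega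
  · intro i j hi hj h
    simp only [hys] at h
    by_cases h1 : i = 0 <;> by_cases h2 : j = 0
    · omega
    · rw [if_pos h1, if_neg h2] at h; exact absurd h.symm (hfy (j-1) (by omega))
    · rw [if_neg h1, if_pos h2] at h; exact absurd h (hfy (i-1) (by omega))
    · rw [if_neg h1, if_neg h2] at h
      have := hf2 (i-1) (j-1) (by omega) (by omega) h; omega
  · intro i hi
    simp only [hxs, hys]
    by_cases h1 : i = 0
    · rw [if_pos h1, if_pos h1]; exact hxy0
    · rw [if_neg h1, if_neg h1]
      exact hcomp _ (hg1 (i-1) (by omega)) _ (Finset.mem_of_mem_erase (hf1 (i-1) (by omega)))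
  · intro i hi
    simp only [hxs, hys]
    rw [if_neg (by omega : ¬ i + 1 = 0)]
    have hgm : g (i+1-1) ∈ s.erase x := hg1 i (by omega)
    by_cases h1 : i = 0
    · rw [if_pos h1]
      exact (hcomp _ hgm _ hy0).symm
    · rw [if_neg h1]
      exact (hcomp _ hgm _ (Finset.mem_of_mem_erase (hf1 (i-1) (by omega)))).symm

lemma caseB_path {X Y : Type*} (G : SimpleGraph (X ⊕ Y)) (r m : ℕ) (hr : r = m + 2)
    (s : Finset X) (t : Finset Y) (y : Y) (hy : y ∈ t)
    (htcard : t.card = r) (hscard : r + 1 ≤ s.card)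
    (x0 x1 : X) (hx0 : x0 ∈ s) (hx1 : x1 ∈ s) (hne : x0 ≠ x1)
    (h0 : G.Adj (Sum.inl x0) (Sum.inr y)) (h1 : G.Adj (Sum.inl x1) (Sum.inr y))
    (hcomp : ∀ x ∈ s, ∀ y' ∈ t.erase y, G.Adj (Sum.inl x) (Sum.inr y')) :
    ∃ (u v : X) (p : G.Walk (Sum.inl u) (Sum.inl v)), p.IsPath ∧ p.length = 2*r := by
  have hte : (t.erase y).card = r - 1 := by rw [Finset.card_erase_of_mem hy]; omega
  obtain ⟨f, hf1, hf2⟩ := exists_inj_fun (t.erase y) (r-1) (le_of_eq hte.symm)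
    (Finset.card_pos.1 (by omega))
  have hse : r - 1 ≤ ((s.erase x0).erase x1).card := by
    rw [Finset.card_erase_of_mem (Finset.mem_erase.2 ⟨hne.symm, hx1⟩),
      Finset.card_erase_of_mem hx0]
    omega
  obtain ⟨g, hg1, hg2⟩ := exists_inj_fun ((s.erase x0).erase x1) (r-1) hse
    (Finset.card_pos.1 (by omega))
  set xs : ℕ → X := fun j => if j = 0 then x0 else if j = 1 then x1 else g (j-2) with hxs
  set ys : ℕ → Y := fun j => if j = 0 then y else f (j-1) with hys
  have hgs : ∀ j, j < r - 1 → g j ∈ s := fun j hj =>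
    Finset.mem_of_mem_erase (Finset.mem_of_mem_erase (hg1 j hj))
  have hg0 : ∀ j, j < r - 1 → g j ≠ x0 := fun j hj he =>
    (Finset.ne_of_mem_erase (Finset.mem_of_mem_erase (hg1 j hj))) he
  have hg1' : ∀ j, j < r - 1 → g j ≠ x1 := fun j hj he =>
    (Finset.ne_of_mem_erase (hg1 j hj)) he
  have hfy : ∀ j, j < r - 1 → f j ≠ y := fun j hj he =>
    (Finset.ne_of_mem_erase (hf1 j hj)) he
  apply seqs_give_path G r xs ys
  · intro i j hi hj h
    simp only [hxs] at h
    by_cases hi0 : i = 0 <;> by_cases hj0 : j = 0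
    · omega
    all_goals by_cases hi1 : i = 1 <;> by_cases hj1 : j = 1
    all_goals first
      | omega
      | (rw [if_pos hi0] at h
         rw [if_neg hj0] at h
         first
           | (rw [if_pos hj1] at h; exact absurd h hne)
           | (rw [if_neg hj1] at h; exact absurd h.symm (hg0 (j-2) (by omega))))
      | (rw [if_neg hi0] at h
         rw [if_pos hj0] at h
         first
           | (rw [if_pos hi1] at h; exact absurd h.symm hne)
           | (rw [if_neg hi1] at h; exact absurd h (hg0 (i-2) (by omega))))
      | (rw [if_neg hi0, if_neg hj0] at h
         first
           | (rw [if_pos hi1, if_neg hj1] at h; exact absurd h.symm (hg1' (j-2) (by omega)))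
           | (rw [if_neg hi1, if_pos hj1] at h; exact absurd h (hg1' (i-2) (by omega)))
           | (rw [if_neg hi1, if_neg hj1] at h
              have := hg2 (i-2) (j-2) (by omega) (by omega) h
              omega))
  · intro i j hi hj h
    simp only [hys] at h
    by_cases hi0 : i = 0 <;> by_cases hj0 : j = 0
    · omega
    · rw [if_pos hi0, if_neg hj0] at h; exact absurd h.symm (hfy (j-1) (by omega))
    · rw [if_neg hi0, if_pos hj0] at h; exact absurd h (hfy (i-1) (by omega))
    · rw [if_neg hi0, if_neg hj0] at h
      have := hf2 (i-1) (j-1) (by omega) (by omega) h; omega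
  · intro i hi
    simp only [hxs, hys]
    by_cases hi0 : i = 0
    · rw [if_pos hi0, if_pos hi0]; exact h0
    · rw [if_neg hi0, if_neg hi0]
      have hft : f (i-1) ∈ t.erase y := hf1 (i-1) (by omega)
      by_cases hi1 : i = 1
      · rw [if_pos hi1]; exact hcomp _ hx1 _ hft
      · rw [if_neg hi1]; exact hcomp _ (hgs (i-2) (by omega)) _ hft
  · intro i hi
    simp only [hxs, hys]
    rw [if_neg (by omega : ¬ i + 1 = 0)]
    by_cases hi0 : i = 0
    · rw [if_pos hi0, if_pos (by omega : i + 1 = 1)]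
      exact h1.symm
    · rw [if_neg hi0, if_neg (by omega : ¬ i + 1 = 1)]
      have hft : f (i-1) ∈ t.erase y := hf1 (i-1) (by omega)
      exact (hcomp _ (hgs (i+1-2) (by omega)) _ hft).symm


lemma aux_main {X Y : Type*} (G : SimpleGraph (X ⊕ Y)) (r m : ℕ) (hr : r = m + 2)
    (hpath : ¬ ∃ (u v : X) (p : G.Walk (Sum.inl u) (Sum.inl v)), p.IsPath ∧ p.length = 2 * r) :
    ∀ (N : ℕ) (s : Finset X) (t : Finset Y), s.card + t.card = N → r ≤ s.card → r - 1 ≤ t.card →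
      Ebip G s t + r * (r-1) ≤ (r-1) * s.card + r * t.card ∧
      (Ebip G s t + r * (r-1) = (r-1) * s.card + r * t.card →
        (∀ x ∈ s, ∀ y ∈ t, G.Adj (Sum.inl x) (Sum.inr y)) ∧ (s.card = r ∨ t.card = r - 1)) := by
  intro N
  induction N using Nat.strong_induction_on with
  | _ N ih =>
  intro s t hN hs ht
  obtain ⟨hEle, hEeq⟩ := Ebip_le G s t
  by_cases ht' : t.card = r - 1
  · have hmul : s.card * t.card = (r-1) * s.card := by rw [ht', Nat.mul_comm]
    have hmul2 : r * t.card = r * (r-1) := by rw [ht']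
    constructor
    · omega
    · intro heq
      exact ⟨hEeq.1 (by omega), Or.inr ht'⟩
  by_cases hs' : s.card = r
  · have hmul : s.card * t.card = r * t.card := by rw [hs']
    have hmul2 : (r-1) * s.card = r * (r-1) := by rw [hs', Nat.mul_comm]
    constructor
    · omega
    · intro heq
      exact ⟨hEeq.1 (by omega), Or.inl hs'⟩
  -- now r + 1 ≤ s.card and r ≤ t.card
  have hs2 : r + 1 ≤ s.card := by omega
  have ht2 : r ≤ t.card := by omega
  by_cases hA : ∃ x ∈ s, (t.filter fun y => G.Adj (Sum.inl x) (Sum.inr y)).card ≤ r - 1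
  · obtain ⟨x, hx, hdeg⟩ := hA
    have hse : (s.erase x).card = s.card - 1 := Finset.card_erase_of_mem hx
    have hdecomp := Ebip_erase_left G s t x hx
    obtain ⟨ihle, iheq⟩ := ih (N-1) (by omega) (s.erase x) t (by omega) (by omega) ht
    have key : (r-1) * s.card = (r-1) * (s.card - 1) + (r-1) := by
      have h5 : s.card = (s.card - 1) + 1 := by omega
      calc (r-1) * s.card = (r-1) * ((s.card - 1) + 1) := by rw [← h5]
        _ = (r-1) * (s.card - 1) + (r-1) := by ring
    rw [hse] at ihle iheq
    constructor
    · omega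
    · intro heq
      exfalso
      have hd : (t.filter fun y => G.Adj (Sum.inl x) (Sum.inr y)).card = r - 1 := by omega
      obtain ⟨hcomp, hor⟩ := iheq (by omega)
      have hscard : s.card = r + 1 := by omega
      have hy0 : ∃ y0 ∈ t, G.Adj (Sum.inl x) (Sum.inr y0) := by
        have : (t.filter fun y => G.Adj (Sum.inl x) (Sum.inr y)).Nonempty :=
          Finset.card_pos.1 (by omega)
        obtain ⟨y0, hy0⟩ := this
        exact ⟨y0, (Finset.mem_filter.1 hy0).1, (Finset.mem_filter.1 hy0).2⟩
      obtain ⟨y0, hy0t, hy0a⟩ := hy0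
      exact hpath (caseA_path G r m hr s t x hx hscard ht2 y0 hy0t hy0a hcomp)
  by_cases hB : ∃ y ∈ t, (s.filter fun x => G.Adj (Sum.inl x) (Sum.inr y)).card ≤ r
  · obtain ⟨y, hy, hdeg⟩ := hB
    have hte : (t.erase y).card = t.card - 1 := Finset.card_erase_of_mem hy
    have hdecomp := Ebip_erase_right G s t y hy
    obtain ⟨ihle, iheq⟩ := ih (N-1) (by omega) s (t.erase y) (by omega) hs (by omega)
    have key : r * t.card = r * (t.card - 1) + r := by
      have h5 : t.card = (t.card - 1) + 1 := by omega
      calc r * t.card = r * ((t.card - 1) + 1) := by rw [← h5]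
        _ = r * (t.card - 1) + r := by ring
    rw [hte] at ihle iheq
    constructor
    · omega
    · intro heq
      exfalso
      have hd : (s.filter fun x => G.Adj (Sum.inl x) (Sum.inr y)).card = r := by omega
      obtain ⟨hcomp, hor⟩ := iheq (by omega)
      have htcard : t.card = r := by omega
      have hx01 : ∃ x0 ∈ (s.filter fun x => G.Adj (Sum.inl x) (Sum.inr y)),
          ∃ x1 ∈ (s.filter fun x => G.Adj (Sum.inl x) (Sum.inr y)), x0 ≠ x1 :=
        Finset.one_lt_card.1 (by omega)
      obtain ⟨x0, hx0f, x1, hx1f, hnex⟩ := hx01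
      exact hpath (caseB_path G r m hr s t y hy htcard hs2 x0 x1
        (Finset.mem_filter.1 hx0f).1 (Finset.mem_filter.1 hx1f).1 hnex
        (Finset.mem_filter.1 hx0f).2 (Finset.mem_filter.1 hx1f).2 hcomp)
  · exfalso
    push_neg at hA hB
    apply hpath
    obtain ⟨xs, ys, hxinj, hyinj, h1, h2⟩ := greedy_seqs G r (by omega) s t
      (Finset.card_pos.1 (by omega)) (fun x hx => by have := hA x hx; omega)
      (fun y hy => by have := hB y hy; omega)
    exact seqs_give_path G r xs ys hxinj hyinj h1 h2


/-- Lemma 2.2: a bipartite graph with parts `X`, `Y` (`|X| ≥ r`, `|Y| ≥ r-1 ≥ 1`) having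
no path on `2r+1` vertices with both endpoints in `X` has at most
`(r-1)|X| + r|Y| - r(r-1)` edges, with equality iff it is complete bipartite and
`|X| = r` or `|Y| = r-1`. -/
theorem stmt12 {X Y : Type*} [Fintype X] [Fintype Y] (r : ℕ) (hr : 2 ≤ r)
    (hX : r ≤ Fintype.card X) (hY : r - 1 ≤ Fintype.card Y)
    (G : SimpleGraph (X ⊕ Y)) (hbip : G ≤ completeBipartiteGraph X Y)
    (hpath : ¬ ∃ (u v : X) (p : G.Walk (Sum.inl u) (Sum.inl v)),
      p.IsPath ∧ p.length = 2 * r) :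
    edgeCount G + r * (r - 1) ≤ (r - 1) * Fintype.card X + r * Fintype.card Y ∧
    (edgeCount G + r * (r - 1) = (r - 1) * Fintype.card X + r * Fintype.card Y ↔
      G = completeBipartiteGraph X Y ∧
        (Fintype.card X = r ∨ Fintype.card Y = r - 1)) := by
  obtain ⟨m, hm⟩ : ∃ m, r = m + 2 := ⟨r - 2, by omega⟩
  have hE : edgeCount G = Ebip G Finset.univ Finset.univ := edgeCount_eq_Ebip G hbip
  have hcX : (Finset.univ : Finset X).card = Fintype.card X := Finset.card_univ
  have hcY : (Finset.univ : Finset Y).card = Fintype.card Y := Finset.card_univ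
  obtain ⟨hle, heq⟩ := aux_main G r m hm hpath
    ((Finset.univ : Finset X).card + (Finset.univ : Finset Y).card)
    Finset.univ Finset.univ rfl (by omega) (by omega)
  rw [hcX, hcY] at hle heq
  rw [hE]
  refine ⟨hle, ?_, ?_⟩
  · intro h
    obtain ⟨hcomp, hor⟩ := heq h
    refine ⟨le_antisymm hbip ?_, hor⟩
    intro a b hab
    rcases a with x | y <;> rcases b with x' | y'
    · simp [completeBipartiteGraph_adj] at hab
    · exact hcomp x (Finset.mem_univ _) y' (Finset.mem_univ _)
    · exact (hcomp x' (Finset.mem_univ _) y (Finset.mem_univ _)).symm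
    · simp [completeBipartiteGraph_adj] at hab
  · rintro ⟨hG, hor⟩
    have hcomp : ∀ x ∈ (Finset.univ : Finset X), ∀ y ∈ (Finset.univ : Finset Y),
        G.Adj (Sum.inl x) (Sum.inr y) := by
      intro x _ y _
      rw [hG]
      simp [completeBipartiteGraph_adj]
    have hfull : Ebip G Finset.univ Finset.univ = Fintype.card X * Fintype.card Y := by
      rw [← hcX, ← hcY]
      exact (Ebip_le G Finset.univ Finset.univ).2.2 hcomp
    rw [hfull]
    have hr1 : r - 1 = m + 1 := by omega
    rcases hor with h | h
    · rw [h, hr1, hm]; ring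
    · rw [h, hr1, hm]; ring
end

section
/- Let G be a graph on n vertices, let x be a nonnegative eigenvector of the adjacency matrix of G for the eigenvalue ρ(G), let u* be a vertex where x attains its maximum entry (with x_{u*} > 0), and set A = N_G(u*) and B = V(G) \ (A ∪ {u*}). Then |A| ≥ ρ(G) and ρ(G)² ≤ |A| + 2e(A) + e(A,B). -/
open SimpleGraph Finset

attribute [local instance] Classical.propDecidable

lemma ordPairs_eq_sum {V : Type*} (G : SimpleGraph V) (s t : Finset V) :
    ordPairs G s t = ∑ v ∈ s, (t.filter (G.Adj v)).card := by
  classical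
  unfold ordPairs
  rw [Finset.card_filter, Finset.sum_product]
  refine Finset.sum_congr rfl fun v _ => ?_
  rw [Finset.card_filter]

/-- With `A = N_G(u*)` and `B = V ∖ (A ∪ {u*})`: `|A| ≥ ρ(G)` and
`ρ(G)² ≤ |A| + 2e(A) + e(A,B)`.  Here `ordPairs G A A = 2·e(A)` and, since `A` and `B`
are disjoint, `ordPairs G A B = e(A,B)`. -/
theorem stmt14 (n : ℕ) (G : SimpleGraph (Fin n))
    (x : Fin n → ℝ) (hx : (G.adjMatrix ℝ).mulVec x = adjSpectralRadius G • x)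
    (hnn : ∀ i, 0 ≤ x i) (u : Fin n) (hmax : ∀ i, x i ≤ x u) (hpos : 0 < x u) :
    adjSpectralRadius G ≤ ((G.neighborFinset u).card : ℝ) ∧
    adjSpectralRadius G ^ 2 ≤ ((G.neighborFinset u).card : ℝ) +
      (ordPairs G (G.neighborFinset u) (G.neighborFinset u) : ℝ) +
      (ordPairs G (G.neighborFinset u)
        (Finset.univ \ insert u (G.neighborFinset u)) : ℝ) := by
  classical
  set ρ := adjSpectralRadius G with hρ
  set A := G.neighborFinset u with hA
  set B := (Finset.univ : Finset (Fin n)) \ insert u A with hB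
  have key : ∀ v, ρ * x v = ∑ w ∈ G.neighborFinset v, x w := by
    intro v
    have := congrFun hx v
    rw [SimpleGraph.adjMatrix_mulVec_apply] at this
    simpa [mul_comm] using this.symm
  -- first part
  have h1 : ρ * x u ≤ (A.card : ℝ) * x u := by
    rw [key u]
    calc ∑ w ∈ A, x w ≤ ∑ _w ∈ A, x u := Finset.sum_le_sum fun w _ => hmax w
      _ = (A.card : ℝ) * x u := by rw [Finset.sum_const, nsmul_eq_mul]
  have part1 : ρ ≤ (A.card : ℝ) := le_of_mul_le_mul_right h1 hpos
  refine ⟨part1, ?_⟩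
  -- second part
  have h2 : ρ ^ 2 * x u = ∑ v ∈ A, ∑ w ∈ G.neighborFinset v, x w := by
    have : ρ ^ 2 * x u = ρ * (ρ * x u) := by ring
    rw [this, key u, Finset.mul_sum]
    exact Finset.sum_congr rfl fun v _ => key v
  have h3 : ρ ^ 2 * x u ≤ (∑ v ∈ A, ((G.neighborFinset v).card : ℝ)) * x u := by
    rw [h2, Finset.sum_mul]
    refine Finset.sum_le_sum fun v _ => ?_
    calc ∑ w ∈ G.neighborFinset v, x w ≤ ∑ _w ∈ G.neighborFinset v, x u :=
          Finset.sum_le_sum fun w _ => hmax w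
      _ = ((G.neighborFinset v).card : ℝ) * x u := by rw [Finset.sum_const, nsmul_eq_mul]
  -- counting identity
  have hcount : ∑ v ∈ A, (G.neighborFinset v).card
      = A.card + ordPairs G A A + ordPairs G A B := by
    have huA : u ∉ A := by simp [hA]
    have hsplit : ∀ v ∈ A, (G.neighborFinset v).card
        = 1 + (A.filter (G.Adj v)).card + (B.filter (G.Adj v)).card := by
      intro v hv
      have hvu : G.Adj v u := (G.mem_neighborFinset u v).mp hv |>.symm
      have huniv : (Finset.univ : Finset (Fin n)) = insert u A ∪ B := by
        rw [hB, Finset.union_sdiff_of_subset (Finset.subset_univ _)]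
      have hdisj : Disjoint (insert u A) B := Finset.disjoint_sdiff
      have : G.neighborFinset v = Finset.univ.filter (G.Adj v) := by
        ext w; simp [SimpleGraph.mem_neighborFinset]
      rw [this, huniv, Finset.filter_union, Finset.card_union_of_disjoint
        (Finset.disjoint_filter_filter hdisj), Finset.filter_insert, if_pos hvu,
        Finset.card_insert_of_notMem (by simp [huA])]
      ring
    rw [Finset.sum_congr rfl hsplit, Finset.sum_add_distrib, Finset.sum_add_distrib,
      Finset.sum_const, smul_eq_mul, mul_one, ordPairs_eq_sum, ordPairs_eq_sum]
  have h4 : ρ ^ 2 ≤ (∑ v ∈ A, ((G.neighborFinset v).card : ℝ)) :=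
    le_of_mul_le_mul_right h3 hpos
  calc ρ ^ 2 ≤ ∑ v ∈ A, ((G.neighborFinset v).card : ℝ) := h4
    _ = ((A.card + ordPairs G A A + ordPairs G A B : ℕ) : ℝ) := by
        rw [← hcount]; push_cast; ring
    _ = (A.card : ℝ) + (ordPairs G A A : ℝ) + (ordPairs G A B : ℝ) := by push_cast; ring
end

section
/- Let r ≥ 1 and let G be a B_{r+1}-free graph on n vertices with ρ(G) > r. Let x be a nonnegative eigenvector of the adjacency matrix of G for the eigenvalue ρ(G), let u* be a vertex where x attains its maximum entry (with x_{u*} > 0), and set A = N_G(u*) and B = V(G) \ (A ∪ {u*}). Then for every edge u₁u₂ of G with u₁, u₂ ∈ A, one has x_{u₁} + x_{u₂} ≤ ((|B| + r + 1)/(ρ(G) − r)) · x_{u*}. -/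
open SimpleGraph Finset

attribute [local instance] Classical.propDecidable

/-! Take an edge `ab` inside `N(u*)` maximizing `x_a + x_b`. Expanding `ρ x_a` over `N(a)`:
`u*` contributes `x_{u*}`, the at most `r` common neighbours of `u*` and `a` (a book `B_{r+1}` on
the edge `u*a` is excluded) each contribute at most `x_b` by maximality, and the remaining
neighbours lie in `B`. Adding the same estimate for `b`, the two `B`-parts overlap only in common
neighbours of `a` and `b` other than `u*`, at most `r - 1` of them, so
`(ρ - r)(x_a + x_b) ≤ (|B| + r + 1) x_{u*}`. -/

lemma Finset.sum_le_mul_of_card_le {ι R : Type*} [Semiring R] [PartialOrder R] [IsOrderedRing R]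
    {s : Finset ι} {f : ι → R} {c m : R} (hc : 0 ≤ c) (hs : (#s : R) ≤ m)
    (hf : ∀ i ∈ s, f i ≤ c) : ∑ i ∈ s, f i ≤ m * c :=
  (sum_le_card_nsmul s f c hf).trans <| by
    rw [nsmul_eq_mul]
    exact mul_le_mul_of_nonneg_right hs hc

section

variable {V : Type*} {G : SimpleGraph V}

lemma contains_book_of_adj {a b : V} (hab : G.Adj a b) {s : ℕ} (f : Fin s ↪ V)
    (hf : ∀ i, G.Adj a (f i) ∧ G.Adj b (f i)) : Contains G (book s) := by
  refine ⟨⟨Sum.elim ![a, b] f, ?_⟩, ?_⟩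
  · refine (injective_pair_iff_ne.2 hab.ne).sumElim f.injective fun i j h => ?_
    fin_cases i
    · exact (hf j).1.ne h
    · exact (hf j).2.ne h
  · rintro (i | i) (j | j) h <;>
      simp only [book, fromRel_adj, Sum.isLeft_inl, Sum.isLeft_inr] at h
    · fin_cases i <;> fin_cases j <;> simp_all [G.adj_comm]
    · fin_cases i
      · exact (hf j).1
      · exact (hf j).2
    · fin_cases j
      · exact (hf i).1.symm
      · exact (hf i).2.symm
    · simp at h

lemma card_inter_neighborFinset_le_of_not_contains_book [G.LocallyFinite] [DecidableEq V]
    {r : ℕ} (hfree : ¬ Contains G (book (r + 1))) {a b : V} (hab : G.Adj a b) :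
    #(G.neighborFinset a ∩ G.neighborFinset b) ≤ r := by
  by_contra! h
  obtain ⟨f⟩ : Nonempty (Fin (r + 1) ↪ ↥(G.neighborFinset a ∩ G.neighborFinset b)) :=
    Function.Embedding.nonempty_of_card_le (by simpa using h)
  refine hfree (contains_book_of_adj hab (f.trans (Function.Embedding.subtype _)) fun i => ?_)
  exact mem_inter.1 (f i).2 |>.imp (G.mem_neighborFinset _ _).1 (G.mem_neighborFinset _ _).1

lemma sum_neighborFinset_eq_of_adjMatrix_mulVec_eq [Fintype V] {x : V → ℝ} {ρ : ℝ}
    (hx : (G.adjMatrix ℝ).mulVec x = ρ • x) (v : V) :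
    ∑ w ∈ G.neighborFinset v, x w = ρ * x v := by
  simpa [adjMatrix_mulVec_apply] using congrFun hx v

variable (x : V → ℝ) {u : V}

lemma sum_neighborFinset_le_of_adj [G.LocallyFinite] [DecidableEq V] {r : ℕ} {c : ℝ} {a : V}
    (hua : G.Adj u a) (hcard : #(G.neighborFinset u ∩ G.neighborFinset a) ≤ r) (hc : 0 ≤ c)
    (hle : ∀ w ∈ G.neighborFinset u ∩ G.neighborFinset a, x w ≤ c) :
    ∑ w ∈ G.neighborFinset a, x w ≤
      x u + r * c + ∑ w ∈ G.neighborFinset a \ insert u (G.neighborFinset u), x w := by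
  rw [← sum_inter_add_sum_sdiff (G.neighborFinset a) (insert u (G.neighborFinset u)),
    inter_insert_of_mem (by simpa using hua.symm), sum_insert (by simp), inter_comm]
  have := sum_le_mul_of_card_le hc (Nat.cast_le.2 hcard) hle
  linarith

lemma sum_sdiff_add_sum_sdiff_le [Fintype V] [DecidableEq V] {r : ℕ} {a b : V}
    (hua : G.Adj u a) (hub : G.Adj u b) (hcard : #(G.neighborFinset a ∩ G.neighborFinset b) ≤ r)
    (hmax : ∀ i, x i ≤ x u) (hu : 0 ≤ x u) :
    ∑ w ∈ G.neighborFinset a \ insert u (G.neighborFinset u), x w +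
        ∑ w ∈ G.neighborFinset b \ insert u (G.neighborFinset u), x w ≤
      (#(univ \ insert u (G.neighborFinset u)) + r - 1) * x u := by
  set S := insert u (G.neighborFinset u)
  rw [← sum_union_inter]
  have hunion : G.neighborFinset a \ S ∪ G.neighborFinset b \ S ⊆ univ \ S :=
    union_subset (sdiff_subset_sdiff (subset_univ _) le_rfl)
      (sdiff_subset_sdiff (subset_univ _) le_rfl)
  have hu_mem : u ∈ G.neighborFinset a ∩ G.neighborFinset b := by simp [hua.symm, hub.symm]
  have hinter : (G.neighborFinset a \ S) ∩ (G.neighborFinset b \ S) ⊆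
      (G.neighborFinset a ∩ G.neighborFinset b).erase u := by
    intro w
    simp only [S, mem_inter, mem_sdiff, mem_insert, mem_erase]
    tauto
  have hinter_card : #((G.neighborFinset a \ S) ∩ (G.neighborFinset b \ S)) + 1 ≤ r := by
    have := card_erase_add_one hu_mem
    have := card_le_card hinter
    omega
  have h₁ := sum_le_mul_of_card_le hu (Nat.cast_le.2 (card_le_card hunion)) fun i _ => hmax i
  have h₂ := sum_le_mul_of_card_le (m := (r : ℝ) - 1) hu
    (by rw [le_sub_iff_add_le]; exact_mod_cast hinter_card) fun i _ => hmax i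
  linarith

lemma sub_mul_add_le_of_locallyMaximal [Fintype V] [DecidableEq V] {r : ℕ} {ρ : ℝ}
    (hρ : ∀ v, ∑ w ∈ G.neighborFinset v, x w = ρ * x v)
    (hcommon : ∀ a b, G.Adj a b → #(G.neighborFinset a ∩ G.neighborFinset b) ≤ r)
    (hnn : ∀ i, 0 ≤ x i) (hmax : ∀ i, x i ≤ x u) {a b : V} (hua : G.Adj u a) (hub : G.Adj u b)
    (hab : G.Adj a b) (ha : ∀ w ∈ G.neighborFinset u ∩ G.neighborFinset a, x w ≤ x b)
    (hb : ∀ w ∈ G.neighborFinset u ∩ G.neighborFinset b, x w ≤ x a) :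
    (ρ - r) * (x a + x b) ≤ (#(univ \ insert u (G.neighborFinset u)) + r + 1) * x u := by
  have hA := sum_neighborFinset_le_of_adj x hua (hcommon u a hua) (hnn b) ha
  have hB := sum_neighborFinset_le_of_adj x hub (hcommon u b hub) (hnn a) hb
  have hout := sum_sdiff_add_sum_sdiff_le x hua hub (hcommon a b hab) hmax (hnn u)
  rw [hρ] at hA hB
  linarith

end

theorem stmt16_general (r n : ℕ) (G : SimpleGraph (Fin n))
    (hfree : ¬ Contains G (book (r + 1)))
    (hρ : (r : ℝ) < adjSpectralRadius G)
    (x : Fin n → ℝ) (hx : (G.adjMatrix ℝ).mulVec x = adjSpectralRadius G • x)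
    (hnn : ∀ i, 0 ≤ x i) (u : Fin n) (hmax : ∀ i, x i ≤ x u)
    (u₁ u₂ : Fin n) (h₁ : u₁ ∈ G.neighborFinset u) (h₂ : u₂ ∈ G.neighborFinset u)
    (hadj : G.Adj u₁ u₂) :
    x u₁ + x u₂ ≤
      (((Finset.univ \ insert u (G.neighborFinset u)).card : ℝ) + r + 1) /
        (adjSpectralRadius G - r) * x u := by
  set E := (G.neighborFinset u ×ˢ G.neighborFinset u).filter fun p => G.Adj p.1 p.2
  have hmemE {a b : Fin n} : (a, b) ∈ E ↔ G.Adj u a ∧ G.Adj u b ∧ G.Adj a b := by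
    simp [E, and_assoc]
  have hu₁₂ : (u₁, u₂) ∈ E := hmemE.2 ⟨by simpa using h₁, by simpa using h₂, hadj⟩
  obtain ⟨⟨a, b⟩, hE, hmaxE⟩ := exists_max_image E (fun p => x p.1 + x p.2) ⟨_, hu₁₂⟩
  obtain ⟨hua, hub, hab⟩ := hmemE.1 hE
  have key := sub_mul_add_le_of_locallyMaximal x
    (sum_neighborFinset_eq_of_adjMatrix_mulVec_eq hx)
    (fun _ _ => card_inter_neighborFinset_le_of_not_contains_book hfree) hnn hmax hua hub hab
    (fun w hw => by simpa using hmaxE (a, w) (hmemE.2 ⟨hua, by simp_all⟩))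
    (fun w hw => by linarith [hmaxE (b, w) (hmemE.2 ⟨hub, by simp_all⟩)])
  have hle : x u₁ + x u₂ ≤ x a + x b := hmaxE _ hu₁₂
  rw [div_mul_eq_mul_div, le_div_iff₀ (sub_pos.2 hρ)]
  linarith [mul_le_mul_of_nonneg_right hle (sub_pos.2 hρ).le]

/-- Claim 3.3: in a `B_{r+1}`-free graph with `ρ(G) > r`, for a nonnegative eigenvector
`x` with maximum entry at `u*`, `A = N_G(u*)`, `B = V ∖ (A ∪ {u*})`, every edge `u₁u₂`
inside `A` satisfies `x_{u₁} + x_{u₂} ≤ ((|B| + r + 1)/(ρ(G) - r))·x_{u*}`. -/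
theorem stmt16 (r n : ℕ) (hr : 1 ≤ r) (G : SimpleGraph (Fin n))
    (hfree : ¬ Contains G (book (r + 1)))
    (hρ : (r : ℝ) < adjSpectralRadius G)
    (x : Fin n → ℝ) (hx : (G.adjMatrix ℝ).mulVec x = adjSpectralRadius G • x)
    (hnn : ∀ i, 0 ≤ x i) (u : Fin n) (hmax : ∀ i, x i ≤ x u) (hpos : 0 < x u)
    (u₁ u₂ : Fin n) (h₁ : u₁ ∈ G.neighborFinset u) (h₂ : u₂ ∈ G.neighborFinset u)
    (hadj : G.Adj u₁ u₂) :
    x u₁ + x u₂ ≤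
      (((Finset.univ \ insert u (G.neighborFinset u)).card : ℝ) + r + 1) /
        (adjSpectralRadius G - r) * x u :=
  stmt16_general r n G hfree hρ x hx hnn u hmax u₁ u₂ h₁ h₂ hadj
end

section
/- Let r ≥ 1 and let G be a B_{r+1}-free graph. Let u* be any vertex of G, and set A = N_G(u*) and B = V(G) \ (A ∪ {u*}). Then the number of non-edges between A and B satisfies |A||B| − e(A,B) ≥ (1/r) · e(A) · (|B| − r + 1), where e(A) is the number of edges inside A and e(A,B) the number of edges between A and B. -/
/-!
In a `B_{r+1}`-free graph every edge lies in at most `r` triangles. For `x ∈ A` let `n x` be the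
number of non-neighbours of `x` in `B`. An edge `xy` inside `A` has `u*` as a common neighbour
outside `B`, so `x` and `y` have at most `r - 1` common neighbours in `B`, whence
`n x + n y ≥ |B| - r + 1`; and each `x ∈ A` has at most `r` neighbours in `A`, all of them common
neighbours of `x` and `u*`. Summing over the edges of `G[A]`,
`e(A) (|B| - r + 1) ≤ ∑_{x ∈ A} deg_A(x) n x ≤ r ∑_{x ∈ A} n x = r (|A||B| - e(A,B))`.
-/

open SimpleGraph Finset

attribute [local instance] Classical.propDecidable

namespace SimpleGraph

variable {V : Type*} (G : SimpleGraph V)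

theorem contains_book_of_le_card_inter [Fintype V] [DecidableEq V] {s : ℕ} {x y : V}
    (hxy : G.Adj x y) (hs : s ≤ #(G.neighborFinset x ∩ G.neighborFinset y)) :
    Contains G (book s) := by
  set C := G.neighborFinset x ∩ G.neighborFinset y
  obtain ⟨f⟩ : Nonempty (Fin s ↪ C) :=
    Function.Embedding.nonempty_of_card_le (by simpa using hs)
  have hC : ∀ i, G.Adj x (f i) ∧ G.Adj y (f i) := fun i => by
    simpa only [C, mem_inter, mem_neighborFinset] using (f i).2
  refine ⟨⟨Sum.elim ![x, y] (fun i => f i), ?_⟩, ?_⟩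
  · refine Function.Injective.sumElim ?_ (Subtype.val_injective.comp f.injective) ?_
    · intro a b hab
      fin_cases a <;> fin_cases b <;> simp_all [hxy.ne, hxy.ne.symm]
    · intro a i
      fin_cases a
      exacts [(hC i).1.ne, (hC i).2.ne]
  · rintro (a | a) (b | b) hab <;> simp only [book, fromRel_adj, Sum.isLeft] at hab
    · fin_cases a <;> fin_cases b <;> simp_all [hxy.symm]
    · fin_cases a
      exacts [(hC b).1, (hC b).2]
    · fin_cases b
      exacts [(hC a).1.symm, (hC a).2.symm]
    · simp at hab

theorem card_inter_neighborFinset_le_of_not_contains_book [Fintype V] [DecidableEq V] {r : ℕ}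
    (hfree : ¬ Contains G (book (r + 1))) {x y : V} (hxy : G.Adj x y) :
    #(G.neighborFinset x ∩ G.neighborFinset y) ≤ r := by
  by_contra! h
  exact hfree (G.contains_book_of_le_card_inter hxy h)

theorem card_add_one_le_card_inter_add_card_filter_not_adj [Fintype V] [DecidableEq V]
    {t : Finset V} {u x y : V} (hu : u ∉ t) (hx : G.Adj x u) (hy : G.Adj y u) :
    #t + 1 ≤ #(G.neighborFinset x ∩ G.neighborFinset y) + #{b ∈ t | ¬G.Adj x b} +
      #{b ∈ t | ¬G.Adj y b} := by
  have hcommon : insert u {b ∈ t | G.Adj x b ∧ G.Adj y b} ⊆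
      G.neighborFinset x ∩ G.neighborFinset y := by
    intro b hb
    rcases mem_insert.1 hb with rfl | hb <;> simp_all
  have hcover : t ⊆ {b ∈ t | G.Adj x b ∧ G.Adj y b} ∪ {b ∈ t | ¬G.Adj x b} ∪
      {b ∈ t | ¬G.Adj y b} := by
    intro b hb
    simp only [mem_union, mem_filter]
    tauto
  have h₁ := card_le_card hcommon
  have h₂ := (card_le_card hcover).trans
    ((card_union_le _ _).trans (add_le_add_left (card_union_le _ _) _))
  rw [card_insert_of_notMem (fun h => hu (mem_filter.1 h).1)] at h₁
  omega

theorem two_mul_edgesIn (s : Finset V) : 2 * edgesIn G s = ordPairs G s s := by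
  rw [edgesIn, Set.ncard_eq_toFinset_card', ← edgeFinset, two_mul_card_edgeFinset, ordPairs]
  refine card_bij' (fun p _ => (p.1.1, p.2.1))
    (fun p hp => (⟨p.1, (mem_product.1 (mem_filter.1 hp).1).1⟩,
      ⟨p.2, (mem_product.1 (mem_filter.1 hp).1).2⟩)) ?_ ?_ ?_ ?_ <;> simp_all

theorem ordPairs_add_sum_card_filter_not_adj (s t : Finset V) :
    ordPairs G s t + ∑ x ∈ s, #{b ∈ t | ¬G.Adj x b} = #s * #t := by
  rw [ordPairs, card_filter, sum_product, ← sum_add_distrib, card_eq_sum_ones s, sum_mul, one_mul]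
  refine sum_congr rfl fun x _ => ?_
  rw [← card_filter, card_filter_add_card_filter_not]

section Weighted

variable {R : Type*} [CommRing R] [LinearOrder R] [IsStrictOrderedRing R]

theorem sum_adj_pairs_add_le (s : Finset V) (w : V → R) (hw : ∀ x ∈ s, 0 ≤ w x) {d : ℕ}
    (hd : ∀ x ∈ s, #{y ∈ s | G.Adj x y} ≤ d) :
    ∑ p ∈ s ×ˢ s with G.Adj p.1 p.2, (w p.1 + w p.2) ≤ 2 * d * ∑ x ∈ s, w x := by
  have hswap : ∑ p ∈ s ×ˢ s with G.Adj p.1 p.2, w p.2 =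
      ∑ p ∈ s ×ˢ s with G.Adj p.1 p.2, w p.1 :=
    sum_nbij' Prod.swap Prod.swap (by simp_all [adj_comm]) (by simp_all [adj_comm])
      (by simp) (by simp) (by simp)
  have hfst : ∑ p ∈ s ×ˢ s with G.Adj p.1 p.2, w p.1 = ∑ x ∈ s, #{y ∈ s | G.Adj x y} * w x := by
    rw [sum_filter, sum_product]
    refine sum_congr rfl fun x _ => ?_
    rw [← sum_filter]
    exact (sum_const (w x)).trans (nsmul_eq_mul _ _)
  calc ∑ p ∈ s ×ˢ s with G.Adj p.1 p.2, (w p.1 + w p.2)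
      = 2 * ∑ x ∈ s, #{y ∈ s | G.Adj x y} * w x := by rw [sum_add_distrib, hswap, hfst]; ring
    _ ≤ 2 * ∑ x ∈ s, d * w x := by
      gcongr with x hx
      · exact hw x hx
      · exact_mod_cast hd x hx
    _ = 2 * d * ∑ x ∈ s, w x := by rw [← mul_sum]; ring

theorem edgesIn_mul_le_of_le_add (s : Finset V) (w : V → R) (hw : ∀ x ∈ s, 0 ≤ w x) {d : ℕ}
    (hd : ∀ x ∈ s, #{y ∈ s | G.Adj x y} ≤ d) {c : R}
    (hc : ∀ x ∈ s, ∀ y ∈ s, G.Adj x y → c ≤ w x + w y) :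
    edgesIn G s * c ≤ d * ∑ x ∈ s, w x := by
  have hpairs := card_nsmul_le_sum {p ∈ s ×ˢ s | G.Adj p.1 p.2} (fun p => w p.1 + w p.2) c
    (fun p hp => by simp only [mem_filter, mem_product] at hp; exact hc _ hp.1.1 _ hp.1.2 hp.2)
  have hcard : (#{p ∈ s ×ˢ s | G.Adj p.1 p.2} : R) = 2 * edgesIn G s := by
    exact_mod_cast (G.two_mul_edgesIn s).symm
  rw [nsmul_eq_mul, hcard] at hpairs
  have h2 : (2 : R) * (edgesIn G s * c) ≤ 2 * (d * ∑ x ∈ s, w x) := by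
    linarith [hpairs.trans (G.sum_adj_pairs_add_le s w hw hd)]
  exact le_of_mul_le_mul_left h2 two_pos

end Weighted

end SimpleGraph

theorem stmt17_general {V : Type*} [Fintype V] [DecidableEq V] (r : ℕ)
    (G : SimpleGraph V) (hfree : ¬ Contains G (book (r + 1))) (u : V) :
    (1 : ℝ) / r * (edgesIn G (G.neighborFinset u)) *
        (((Finset.univ \ insert u (G.neighborFinset u)).card : ℝ) - r + 1) ≤
      ((G.neighborFinset u).card : ℝ) *
          ((Finset.univ \ insert u (G.neighborFinset u)).card : ℝ) -
        (ordPairs G (G.neighborFinset u)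
          (Finset.univ \ insert u (G.neighborFinset u)) : ℝ) := by
  set A := G.neighborFinset u
  set B := univ \ insert u A
  have hcodeg {x y : V} (hxy : G.Adj x y) :=
    G.card_inter_neighborFinset_le_of_not_contains_book hfree hxy
  have hdeg : ∀ x ∈ A, #{y ∈ A | G.Adj x y} ≤ r := fun x hx =>
    (card_le_card fun y hy => by simp_all [A]).trans (hcodeg ((mem_neighborFinset ..).1 hx))
  have hedge : ∀ x ∈ A, ∀ y ∈ A, G.Adj x y →
      (#B : ℝ) - r + 1 ≤ #{b ∈ B | ¬G.Adj x b} + #{b ∈ B | ¬G.Adj y b} := by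
    intro x hx y hy hxy
    have hcover := G.card_add_one_le_card_inter_add_card_filter_not_adj (t := B) (by simp [B])
      ((mem_neighborFinset ..).1 hx).symm ((mem_neighborFinset ..).1 hy).symm
    have hxy_codeg := hcodeg hxy
    have hnat : (#B : ℝ) + 1 ≤ r + #{b ∈ B | ¬G.Adj x b} + #{b ∈ B | ¬G.Adj y b} := by
      exact_mod_cast (by omega)
    linarith
  have hmain := G.edgesIn_mul_le_of_le_add A _ (fun x _ => Nat.cast_nonneg _) hdeg hedge
  have hcount : (ordPairs G A B : ℝ) + ∑ x ∈ A, (#{b ∈ B | ¬G.Adj x b} : ℝ) = #A * #B := by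
    exact_mod_cast G.ordPairs_add_sum_card_filter_not_adj A B
  have hnonadj : (#A : ℝ) * #B - ordPairs G A B = ∑ x ∈ A, (#{b ∈ B | ¬G.Adj x b} : ℝ) := by
    linarith
  rw [one_div_mul_eq_div, div_mul_eq_mul_div, hnonadj]
  exact div_le_of_le_mul₀ r.cast_nonneg (sum_nonneg fun _ _ => Nat.cast_nonneg _)
    (by rw [mul_comm _ (r : ℝ)]; exact hmain)

/-- Claim 3.4: in a `B_{r+1}`-free graph, with `A = N_G(u*)` and `B = V ∖ (A ∪ {u*})`,
the number of non-edges between `A` and `B` satisfies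
`|A||B| - e(A,B) ≥ (1/r)·e(A)·(|B| - r + 1)`. -/
theorem stmt17 {V : Type*} [Fintype V] [DecidableEq V] (r : ℕ) (hr : 1 ≤ r)
    (G : SimpleGraph V) (hfree : ¬ Contains G (book (r + 1))) (u : V) :
    (1 : ℝ) / r * (edgesIn G (G.neighborFinset u)) *
        (((Finset.univ \ insert u (G.neighborFinset u)).card : ℝ) - r + 1) ≤
      ((G.neighborFinset u).card : ℝ) *
          ((Finset.univ \ insert u (G.neighborFinset u)).card : ℝ) -
        (ordPairs G (G.neighborFinset u)
          (Finset.univ \ insert u (G.neighborFinset u)) : ℝ) :=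
  stmt17_general r G hfree u
end

section
/- Let r ≥ 1 and let G be a θ_{r+1}-free graph. Then for every vertex u of G, the subgraph of G induced on the neighborhood N_G(u) contains no path on r+2 vertices (i.e., G[N_G(u)] is P_{r+2}-free). -/
open SimpleGraph Finset

attribute [local instance] Classical.propDecidable

/-! Deleting the vertex `0` of `θ_{r+1}` leaves the path `1, 2, …, r+2`, so `θ_{r+1}` is a
subgraph of the cone over `P_{r+2}`; a `P_{r+2}` inside `N_G(u)` together with `u` is such a cone. -/

theorem theta_adj_succ_succ {r : ℕ} {i j : Fin (r + 2)} (h : (theta r).Adj i.succ j.succ) :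
    (pathGraph (r + 2)).Adj i j := by
  simp only [theta, fromRel_adj, Fin.val_succ] at h
  rw [pathGraph_adj]
  omega

theorem Contains.of_induce_neighborSet {V : Type*} {G : SimpleGraph V} {u : V} {n : ℕ}
    {P : SimpleGraph (Fin n)} {H : SimpleGraph (Fin (n + 1))}
    (hH : ∀ i j : Fin n, H.Adj i.succ j.succ → P.Adj i j)
    (hP : Contains (G.induce (G.neighborSet u)) P) : Contains G H := by
  obtain ⟨f, hf⟩ := hP
  have hu : u ∉ Set.range fun i => (f i : V) := fun ⟨i, hi⟩ => G.ne_of_adj (f i).2 hi.symm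
  refine ⟨⟨Fin.cons u fun i => (f i : V),
    Fin.cons_injective_iff.2 ⟨hu, Subtype.val_injective.comp f.injective⟩⟩, ?_⟩
  intro a b hab
  induction a using Fin.cases with
  | zero =>
    induction b using Fin.cases with
    | zero => exact absurd hab H.irrefl
    | succ j => exact (f j).2
  | succ i =>
    induction b using Fin.cases with
    | zero => exact (f i).2.symm
    | succ j => exact hf i j (hH i j hab)

theorem stmt18_general {V : Type*} (r : ℕ) (G : SimpleGraph V)
    (hfree : ¬ Contains G (theta r)) (u : V) :
    ¬ Contains (G.induce (G.neighborSet u)) (pathGraph (r + 2)) :=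
  fun hP => hfree (Contains.of_induce_neighborSet (fun _ _ => theta_adj_succ_succ) hP)

/-- In a `θ_{r+1}`-free graph, the subgraph induced on any neighborhood is
`P_{r+2}`-free. -/
theorem stmt18 {V : Type*} (r : ℕ) (hr : 1 ≤ r) (G : SimpleGraph V)
    (hfree : ¬ Contains G (theta r)) (u : V) :
    ¬ Contains (G.induce (G.neighborSet u)) (pathGraph (r + 2)) :=
  stmt18_general r G hfree u
end
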